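/- arXiv:2410.12884 — 3 statements merged into one kernel-verified Lean document; each statement's English description precedes it below -/
import Mathlib

section
/- If an OWA mechanism has some weight w_j ∈ (0,1) (so no weight equals 1), then it is not strategy-proof: there exist an agent i, a true peak x_i, a misreport x'_i, and a profile x_{-i} of other reports such that |x_i − f(x'_i, x_{-i})| < |x_i − f(x_i, x_{-i})|. -/
/-
Let `i` be the first index of positive weight; since some weight is fractional, `w i < 1`.
Put the agents before `i` at `0`, agent `i` at `c`, and the agents after `i` at `1`. The
outcome is `1 - w i * (1 - c)`, so at the true peak `c = 1/2` agent `i` is `(1 - w i) / 2`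
away from it, while reporting `w i / 2` moves the outcome to within `(1 - w i)^2 / 2`.
-/

noncomputable def owa {n : ℕ} (w x : Fin n → ℝ) : ℝ :=
  ∑ j, w j * x (Tuple.sort x j)

lemma owa_of_monotone {n : ℕ} (w : Fin n → ℝ) {x : Fin n → ℝ} (hx : Monotone x) :
    owa w x = ∑ j, w j * x j := by
  simp only [owa, Tuple.sort_eq_refl_iff_monotone.mpr hx, Equiv.refl_apply]

section StepProfile

variable {n : ℕ}

def stepProfile (i : Fin n) (c : ℝ) : Fin n → ℝ :=
  Function.update (fun l => if l < i then 0 else 1) i c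

lemma stepProfile_apply (i l : Fin n) (c : ℝ) :
    stepProfile i c l = if l = i then c else if l < i then 0 else 1 :=
  Function.update_apply _ _ _ _

@[simp]
lemma stepProfile_self (i : Fin n) (c : ℝ) : stepProfile i c i = c :=
  Function.update_self _ _ _

@[simp]
lemma update_stepProfile (i : Fin n) (c c' : ℝ) :
    Function.update (stepProfile i c) i c' = stepProfile i c' :=
  Function.update_idem _ _ _

lemma stepProfile_mem_Icc {i : Fin n} {c : ℝ} (hc : c ∈ Set.Icc (0 : ℝ) 1) (l : Fin n) :
    stepProfile i c l ∈ Set.Icc (0 : ℝ) 1 := by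
  rw [stepProfile_apply]
  split_ifs <;> simp [hc]

lemma stepProfile_monotone (i : Fin n) {c : ℝ} (hc : c ∈ Set.Icc (0 : ℝ) 1) :
    Monotone (stepProfile i c) := by
  intro a b hab
  obtain ⟨hc0, hc1⟩ := hc
  simp only [stepProfile_apply]
  split_ifs <;> first | linarith | (exfalso; subst_vars; order)

lemma owa_stepProfile {w : Fin n → ℝ} (hsum : ∑ j, w j = 1) {i : Fin n}
    (hzero : ∀ l < i, w l = 0) {c : ℝ} (hc : c ∈ Set.Icc (0 : ℝ) 1) :
    owa w (stepProfile i c) = 1 - w i * (1 - c) := by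
  have hterm : ∀ l, w l * stepProfile i c l = w l - if l = i then w i * (1 - c) else 0 := by
    intro l
    rw [stepProfile_apply]
    rcases lt_trichotomy l i with hl | rfl | hl
    · simp [hl.ne, hl, hzero l hl]
    · simp only [if_true, lt_irrefl, if_false]; ring
    · simp [hl.ne', not_lt.mpr hl.le]
  rw [owa_of_monotone w (stepProfile_monotone i hc), Finset.sum_congr rfl fun l _ => hterm l,
    Finset.sum_sub_distrib, hsum, Finset.sum_ite_eq' Finset.univ i, if_pos (Finset.mem_univ i)]

end StepProfile

lemma lt_one_of_pos_of_ne {ι : Type*} [Fintype ι] {w : ι → ℝ} (hw : ∀ j, 0 ≤ w j)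
    (hsum : ∑ j, w j = 1) {i j : ι} (hij : i ≠ j) (hj : 0 < w j) : w i < 1 := by
  classical
  have : w i + w j ≤ 1 := by
    rw [← Finset.sum_pair hij, ← hsum]
    exact Finset.sum_le_sum_of_subset_of_nonneg (Finset.subset_univ _) fun l _ _ => hw l
  linarith

lemma exists_first_pos_weight_lt_one {n : ℕ} {w : Fin n → ℝ} (hw : ∀ j, 0 ≤ w j)
    (hsum : ∑ j, w j = 1) (hfrac : ∃ j, w j ∈ Set.Ioo (0 : ℝ) 1) :
    ∃ i, w i ∈ Set.Ioo (0 : ℝ) 1 ∧ ∀ l < i, w l = 0 := by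
  obtain ⟨j, hj0, hj1⟩ := hfrac
  obtain ⟨i, hi, hmin⟩ := wellFounded_lt.has_min {l | 0 < w l} ⟨j, hj0⟩
  refine ⟨i, ⟨hi, ?_⟩, fun l hl => (hw l).antisymm' (not_lt.mp fun h => hmin l h hl)⟩
  by_cases hij : i = j
  · exact hij ▸ hj1
  · exact lt_one_of_pos_of_ne hw hsum hij hj0

theorem owa_fractional_weight_not_strategyproof_general {n : ℕ}
    (w : Fin n → ℝ) (hw : ∀ j, w j ∈ Set.Icc (0:ℝ) 1) (hsum : ∑ j, w j = 1)
    (hfrac : ∃ j, w j ∈ Set.Ioo (0:ℝ) 1) :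
    ∃ (x : Fin n → ℝ) (i : Fin n) (xi' : ℝ),
      (∀ j, x j ∈ Set.Icc (0:ℝ) 1) ∧ xi' ∈ Set.Icc (0:ℝ) 1 ∧
      |x i - owa w (Function.update x i xi')| < |x i - owa w x| := by
  obtain ⟨i, ⟨ha0, ha1⟩, hzero⟩ :=
    exists_first_pos_weight_lt_one (fun j => (hw j).1) hsum hfrac
  set a := w i
  have hhalf : (1 / 2 : ℝ) ∈ Set.Icc 0 1 := by norm_num
  have hmis : a / 2 ∈ Set.Icc (0 : ℝ) 1 := ⟨by linarith, by linarith⟩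
  refine ⟨stepProfile i (1 / 2), i, a / 2, stepProfile_mem_Icc hhalf, hmis, ?_⟩
  rw [update_stepProfile, stepProfile_self, owa_stepProfile hsum hzero hhalf,
    owa_stepProfile hsum hzero hmis]
  calc |1 / 2 - (1 - a * (1 - a / 2))| = (1 - a) ^ 2 / 2 := by
        rw [show 1 / 2 - (1 - a * (1 - a / 2)) = -((1 - a) ^ 2 / 2) by ring, abs_neg,
          abs_of_nonneg (by positivity)]
    _ < (1 - a) / 2 := by nlinarith
    _ = |1 / 2 - (1 - a * (1 - 1 / 2))| := by
        rw [show 1 / 2 - (1 - a * (1 - 1 / 2)) = -((1 - a) / 2) by ring, abs_neg,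
          abs_of_pos (by linarith)]

theorem owa_fractional_weight_not_strategyproof {n : ℕ} (hn : 2 ≤ n)
    (w : Fin n → ℝ) (hw : ∀ j, w j ∈ Set.Icc (0:ℝ) 1) (hsum : ∑ j, w j = 1)
    (hfrac : ∃ j, w j ∈ Set.Ioo (0:ℝ) 1) :
    ∃ (x : Fin n → ℝ) (i : Fin n) (xi' : ℝ),
      (∀ j, x j ∈ Set.Icc (0:ℝ) 1) ∧ xi' ∈ Set.Icc (0:ℝ) 1 ∧
      |x i - owa w (Function.update x i xi')| < |x i - owa w x| :=
  owa_fractional_weight_not_strategyproof_general w hw hsum hfrac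
end

section
/- If an OWA mechanism has w_1 ∈ (0,1), then it violates NOM-W: there exist an agent i with true peak x_i ∈ (0, (1−w_1)/2) and misreport x'_i = 0 such that min_{x_{-i}} u(x_i, f(x_i, x_{-i})) < min_{x_{-i}} u(x_i, f(x'_i, x_{-i})). Specifically the worst-case utility under truth-telling is w_1 − x_i w_1 + x_i, while under the misreport it is w_1 + x_i. -/
/-- The set of utilities agent `i` with true peak `peak` can obtain, over all
profiles in `[0,1]^n` where agent `i` reports `rep`. -/
def utilSet {n : ℕ} (w : Fin n → ℝ) (i : Fin n) (peak rep : ℝ) : Set ℝ :=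
  {u : ℝ | ∃ x : Fin n → ℝ, (∀ j, x j ∈ Set.Icc (0:ℝ) 1) ∧ x i = rep ∧
    u = 1 - |peak - owa w x|}

/-!
The smallest order statistic of a profile is at most `x i` and every other one is at most `1`,
so the output of the OWA mechanism is at most `M(r) = 1 - w₁ + r w₁` (with `w₁ = w ⟨0, _⟩`)
whenever agent `i` reports `r`; this bound is attained when all other agents report `1`. As
outputs are also nonnegative, an agent whose peak lies below `M(r) / 2` has worst-case utility
`1 - (M(r) - peak)`. Reporting `r = 0` instead of the peak lowers `M` by `w₁ · peak > 0` and so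
raises the worst-case utility.
-/

open Finset

section OWA

variable {n : ℕ} (hn : 0 < n) {w : Fin n → ℝ}

lemma apply_sort_zero_le (x : Fin n → ℝ) (i : Fin n) : x (Tuple.sort x ⟨0, hn⟩) ≤ x i := by
  simpa using Tuple.monotone_sort x (Fin.mk_le_of_le_val (Nat.zero_le ((Tuple.sort x).symm i)))

lemma owa_nonneg {x : Fin n → ℝ} (hw : ∀ j, 0 ≤ w j) (hx : ∀ j, 0 ≤ x j) : 0 ≤ owa w x :=
  sum_nonneg fun j _ => mul_nonneg (hw j) (hx _)

lemma owa_eq_add_sum_erase (x : Fin n → ℝ) :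
    owa w x = w ⟨0, hn⟩ * x (Tuple.sort x ⟨0, hn⟩) +
      ∑ j ∈ univ.erase ⟨0, hn⟩, w j * x (Tuple.sort x j) :=
  (add_sum_erase _ _ (mem_univ _)).symm

lemma sum_erase_zero_eq_one_sub (hsum : ∑ j, w j = 1) :
    ∑ j ∈ univ.erase ⟨0, hn⟩, w j = 1 - w ⟨0, hn⟩ := by
  rw [← hsum, ← add_sum_erase _ _ (mem_univ ⟨0, hn⟩), add_sub_cancel_left]

lemma owa_le_one_sub_add {x : Fin n → ℝ} (hw : ∀ j, 0 ≤ w j) (hsum : ∑ j, w j = 1)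
    (hx : ∀ j, x j ≤ 1) (i : Fin n) :
    owa w x ≤ 1 - w ⟨0, hn⟩ + x i * w ⟨0, hn⟩ := by
  have first : w ⟨0, hn⟩ * x (Tuple.sort x ⟨0, hn⟩) ≤ x i * w ⟨0, hn⟩ := by
    rw [mul_comm]
    exact mul_le_mul_of_nonneg_right (apply_sort_zero_le hn x i) (hw _)
  have rest : ∑ j ∈ univ.erase ⟨0, hn⟩, w j * x (Tuple.sort x j) ≤ 1 - w ⟨0, hn⟩ := by
    rw [← sum_erase_zero_eq_one_sub hn hsum]
    exact sum_le_sum fun j _ => mul_le_of_le_one_right (hw j) (hx _)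
  rw [owa_eq_add_sum_erase hn]
  linarith

lemma owa_update_one (hsum : ∑ j, w j = 1) (i : Fin n) {r : ℝ} (hr : r < 1) :
    owa w (Function.update 1 i r) = 1 - w ⟨0, hn⟩ + r * w ⟨0, hn⟩ := by
  set x : Fin n → ℝ := Function.update 1 i r
  have hx_i : x i = r := Function.update_self ..
  have hx_ne : ∀ k, k ≠ i → x k = 1 := fun k hk => by simp [x, Function.update_of_ne hk]
  have sort_zero : Tuple.sort x ⟨0, hn⟩ = i := by
    by_contra hne
    have := apply_sort_zero_le hn x i
    rw [hx_ne _ hne, hx_i] at this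
    linarith
  have rest : ∀ j ∈ univ.erase ⟨0, hn⟩, w j * x (Tuple.sort x j) = w j := fun j hj => by
    rw [hx_ne _ (sort_zero ▸ (Tuple.sort x).injective.ne (ne_of_mem_erase hj)), mul_one]
  rw [owa_eq_add_sum_erase hn, sum_congr rfl rest, sum_erase_zero_eq_one_sub hn hsum,
    sort_zero, hx_i]
  ring

lemma isLeast_utilSet (hw : ∀ j, 0 ≤ w j) (hsum : ∑ j, w j = 1) (i : Fin n) {peak r : ℝ}
    (hr₀ : 0 ≤ r) (hr₁ : r < 1) (hpeak : 2 * peak ≤ 1 - w ⟨0, hn⟩ + r * w ⟨0, hn⟩) :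
    IsLeast (utilSet w i peak r) (w ⟨0, hn⟩ - r * w ⟨0, hn⟩ + peak) := by
  constructor
  · have hx : ∀ j, Function.update (1 : Fin n → ℝ) i r j ∈ Set.Icc (0 : ℝ) 1 := fun j => by
      rcases eq_or_ne j i with rfl | hj
      · simpa using ⟨hr₀, hr₁.le⟩
      · simp [Function.update_of_ne hj]
    have hM := owa_nonneg hw fun j => (hx j).1
    refine ⟨_, hx, Function.update_self .., ?_⟩
    rw [owa_update_one hn hsum i hr₁] at hM ⊢
    rw [abs_of_nonpos (by linarith)]
    ring
  · rintro u ⟨x, hx, rfl, rfl⟩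
    have upper := owa_le_one_sub_add hn hw hsum (fun j => (hx j).2) i
    have lower := owa_nonneg hw fun j => (hx j).1
    have : |peak - owa w x| ≤ 1 - w ⟨0, hn⟩ + x i * w ⟨0, hn⟩ - peak :=
      abs_sub_le_iff.mpr ⟨by linarith, by linarith⟩
    linarith

end OWA

theorem owa_positive_first_weight_violates_NOM_worst {n : ℕ} (hn : 2 ≤ n)
    (w : Fin n → ℝ) (hw : ∀ j, w j ∈ Set.Icc (0:ℝ) 1) (hsum : ∑ j, w j = 1)
    (h1 : w ⟨0, by omega⟩ ∈ Set.Ioo (0:ℝ) 1) :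
    ∃ (i : Fin n) (xi : ℝ),
      xi ∈ Set.Ioo (0:ℝ) ((1 - w ⟨0, by omega⟩) / 2) ∧
      sInf (utilSet w i xi xi) = w ⟨0, by omega⟩ - xi * w ⟨0, by omega⟩ + xi ∧
      sInf (utilSet w i xi 0) = w ⟨0, by omega⟩ + xi ∧
      sInf (utilSet w i xi xi) < sInf (utilSet w i xi 0) := by
  have hn₀ : 0 < n := by omega
  obtain ⟨hw₀, hw₁⟩ := h1
  have hw' : ∀ j, 0 ≤ w j := fun j => (hw j).1
  obtain ⟨xi, hxi_def⟩ : ∃ xi : ℝ, xi = (1 - w ⟨0, hn₀⟩) / 4 := ⟨_, rfl⟩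
  have hxi : 0 < xi := by rw [hxi_def]; linarith
  have truthful := (isLeast_utilSet hn₀ hw' hsum ⟨0, hn₀⟩ (peak := xi) hxi.le
    (by rw [hxi_def]; linarith) (by rw [hxi_def]; nlinarith)).csInf_eq
  have misreport := (isLeast_utilSet hn₀ hw' hsum ⟨0, hn₀⟩ (peak := xi) le_rfl one_pos
    (by rw [hxi_def]; linarith)).csInf_eq
  rw [zero_mul, sub_zero] at misreport
  refine ⟨⟨0, hn₀⟩, xi, ⟨hxi, by rw [hxi_def]; linarith⟩, truthful, misreport, ?_⟩
  rw [truthful, misreport]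
  linarith [mul_pos hxi hw₀]
end

section
/- If an OWA mechanism satisfies w_1 ≥ 1/n and w_n ≥ 1/n, then for every profile x ∈ [0,1]^n and every agent i, |x_i − f(x)| ≤ 1 − 1/n (individual fair share). -/
section TupleSort

variable {α : Type*} [LinearOrder α] {n : ℕ}

theorem Tuple.apply_sort_le_of_val_eq_zero (x : Fin n → α) (i : Fin n) {j : Fin n}
    (hj : (j : ℕ) = 0) : x (Tuple.sort x j) ≤ x i := by
  have hle : j ≤ (Tuple.sort x)⁻¹ i := Fin.le_def.mpr (by omega)
  simpa using Tuple.monotone_sort x hle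

theorem Tuple.le_apply_sort_of_pred_le (x : Fin n → α) (i : Fin n) {j : Fin n}
    (hj : n - 1 ≤ j) : x i ≤ x (Tuple.sort x j) := by
  have hle : (Tuple.sort x)⁻¹ i ≤ j := Fin.le_def.mpr (by omega)
  simpa using Tuple.monotone_sort x hle

end TupleSort

section OWA

variable {n : ℕ} {w x : Fin n → ℝ}

theorem mul_apply_sort_le_owa (hw : ∀ j, 0 ≤ w j) (hx : ∀ j, 0 ≤ x j) (j : Fin n) :
    w j * x (Tuple.sort x j) ≤ owa w x :=
  Finset.single_le_sum (f := fun j => w j * x (Tuple.sort x j))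
    (fun k _ => mul_nonneg (hw k) (hx _)) (Finset.mem_univ j)

theorem one_sub_owa (hsum : ∑ j, w j = 1) :
    1 - owa w x = ∑ j, w j * (1 - x (Tuple.sort x j)) := by
  simp only [owa, mul_sub, mul_one, Finset.sum_sub_distrib, hsum]

theorem mul_one_sub_apply_sort_le_one_sub_owa (hw : ∀ j, 0 ≤ w j) (hsum : ∑ j, w j = 1)
    (hx : ∀ j, x j ≤ 1) (j : Fin n) :
    w j * (1 - x (Tuple.sort x j)) ≤ 1 - owa w x := by
  rw [one_sub_owa hsum]
  exact Finset.single_le_sum (f := fun j => w j * (1 - x (Tuple.sort x j)))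
    (fun k _ => mul_nonneg (hw k) (sub_nonneg.mpr (hx _))) (Finset.mem_univ j)

end OWA

theorem owa_IFS_of_extreme_weights {n : ℕ} (hn : 1 ≤ n)
    (w : Fin n → ℝ) (hw : ∀ j, w j ∈ Set.Icc (0:ℝ) 1) (hsum : ∑ j, w j = 1)
    (h1 : 1 / (n:ℝ) ≤ w ⟨0, by omega⟩) (h2 : 1 / (n:ℝ) ≤ w ⟨n - 1, by omega⟩)
    (x : Fin n → ℝ) (hx : ∀ j, x j ∈ Set.Icc (0:ℝ) 1) (i : Fin n) :
    |x i - owa w x| ≤ 1 - 1 / n := by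
  set σ := Tuple.sort x
  set first : Fin n := ⟨0, by omega⟩
  set last : Fin n := ⟨n - 1, by omega⟩
  have hw₀ : ∀ j, 0 ≤ w j := fun j => (hw j).1
  have hinv : 1 / (n : ℝ) ≤ 1 := by
    rw [div_le_one (by positivity)]
    exact_mod_cast hn
  have hmin : x (σ first) ≤ x i := Tuple.apply_sort_le_of_val_eq_zero x i rfl
  have hmax : x i ≤ x (σ last) := Tuple.le_apply_sort_of_pred_le x i le_rfl
  have hlow := mul_apply_sort_le_owa hw₀ (fun j => (hx j).1) last
  have hup := mul_one_sub_apply_sort_le_one_sub_owa hw₀ hsum (fun j => (hx j).2) first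
  rw [abs_sub_le_iff]
  constructor
  · calc x i - owa w x ≤ (1 - 1 / n) * x (σ last) := by
          nlinarith [mul_le_mul_of_nonneg_right h2 (hx (σ last)).1]
      _ ≤ 1 - 1 / n := mul_le_of_le_one_right (by linarith) (hx _).2
  · calc owa w x - x i ≤ (1 - 1 / n) * (1 - x (σ first)) := by
          nlinarith [mul_le_mul_of_nonneg_right h1 (sub_nonneg.mpr (hx (σ first)).2)]
      _ ≤ 1 - 1 / n := mul_le_of_le_one_right (by linarith) (by linarith [(hx (σ first)).1])
end
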